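/- The integral (1/2π)∫_0^π (1 - cosθ) ln(2 + 2cosθ) dθ equals -1/2. -/

import Mathlib

open Real MeasureTheory Set intervalIntegral

/-- log is interval integrable on [0,1] despite the singularity at 0. -/
lemma log_ii_01 : IntervalIntegrable Real.log volume 0 1 := by
  have h : IntegrableOn (fun x : ℝ => -Real.log x) (Set.Ioc (0:ℝ) 1) volume := by
    apply integrableOn_deriv_of_nonneg (g := fun x : ℝ => x - x * Real.log x)
      (g' := fun x : ℝ => -Real.log x)
    · exact (continuous_id.sub Real.continuous_mul_log).continuousOn
    · intro x hx
      have h1 : HasDerivAt (fun x : ℝ => x - x * Real.log x) (1 - (Real.log x + 1)) x :=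
        (hasDerivAt_id x).sub (Real.hasDerivAt_mul_log (ne_of_gt hx.1))
      convert h1 using 1; ring
    · intro x hx
      simpa using Real.log_nonpos hx.1.le hx.2.le
  rw [intervalIntegrable_iff, uIoc_of_le (by norm_num : (0:ℝ) ≤ 1)]
  exact h.neg.congr (Filter.Eventually.of_forall (fun x => by simp))

lemma log_ii_pi2 : IntervalIntegrable Real.log volume 0 (π/2) := by
  refine log_ii_01.trans (intervalIntegrable_log ?_)
  have h2 : (1:ℝ) ≤ π/2 := by nlinarith [Real.pi_gt_three]
  rw [Set.uIcc_of_le h2]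
  rintro ⟨h, -⟩; norm_num at h

lemma sin2_ii : IntervalIntegrable (fun x => Real.log (2 * Real.sin x)) volume 0 (π/2) := by
  have habs : IntegrableOn (fun x : ℝ => |Real.log x| + Real.log 2) (Set.Ioc 0 (π/2)) volume := by
    have := (log_ii_pi2.abs.add (_root_.intervalIntegrable_const (c := Real.log 2)))
    rw [intervalIntegrable_iff, uIoc_of_le (by positivity : (0:ℝ) ≤ π/2)] at this
    exact this
  rw [intervalIntegrable_iff, uIoc_of_le (by positivity : (0:ℝ) ≤ π/2)]
  refine Integrable.mono' habs ?_ ?_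
  · exact ((Real.measurable_log.comp
      (measurable_const.mul Real.measurable_sin)).aestronglyMeasurable).restrict
  · filter_upwards [ae_restrict_mem measurableSet_Ioc] with x hx
    obtain ⟨hx0, hx2⟩ := hx
    have hsin : 2 / π * x ≤ Real.sin x := Real.mul_le_sin hx0.le hx2
    have hxle : x ≤ 2 * Real.sin x := by
      have hkey : x ≤ 2 * (2/π * x) := by
        rw [show 2 * (2/π * x) = 4*x/π by ring, le_div_iff₀ Real.pi_pos]
        nlinarith [Real.pi_le_four]
      linarith
    have hpos : 0 < 2 * Real.sin x := lt_of_lt_of_le hx0 hxle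
    have hub : Real.log (2 * Real.sin x) ≤ Real.log 2 := by
      apply Real.log_le_log hpos
      nlinarith [Real.sin_le_one x]
    have hlb : Real.log x ≤ Real.log (2 * Real.sin x) := Real.log_le_log hx0 hxle
    rw [Real.norm_eq_abs, abs_le]
    constructor
    · linarith [neg_abs_le (Real.log x), Real.log_nonneg (by norm_num : (1:ℝ) ≤ 2)]
    · linarith [le_abs_self (Real.log x), abs_nonneg (Real.log x)]

lemma cos2_ii : IntervalIntegrable (fun x => Real.log (2 * Real.cos x)) volume 0 (π/2) := by
  have h := sin2_ii.comp_sub_left (π/2)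
  simp only [Real.sin_pi_div_two_sub, sub_self, sub_zero] at h
  exact h.symm

lemma sin_ii_right : IntervalIntegrable (fun x => Real.log (2 * Real.sin x)) volume (π/2) π := by
  have h := sin2_ii.comp_sub_left π
  simp only [Real.sin_pi_sub, sub_zero] at h
  rw [show π - π/2 = π/2 by ring] at h
  exact h.symm

lemma sinpi_ii : IntervalIntegrable (fun x => Real.log (2 * Real.sin x)) volume 0 π :=
  sin2_ii.trans sin_ii_right

lemma Scos_eq : (∫ x in (0:ℝ)..(π/2), Real.log (2 * Real.cos x))
    = ∫ x in (0:ℝ)..(π/2), Real.log (2 * Real.sin x) := by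
  have h := intervalIntegral.integral_comp_sub_left (a := 0) (b := π/2)
    (fun x => Real.log (2 * Real.sin x)) (π/2)
  simp only [Real.sin_pi_div_two_sub, sub_self, sub_zero] at h
  rw [← h, intervalIntegral.integral_symm]

lemma T_eq : (∫ x in (0:ℝ)..π, Real.log (2 * Real.sin x))
    = 2 * ∫ x in (0:ℝ)..(π/2), Real.log (2 * Real.sin x) := by
  rw [← intervalIntegral.integral_add_adjacent_intervals (a := (0:ℝ)) (b := π/2) (c := π)
    sin2_ii sin_ii_right]
  have h := intervalIntegral.integral_comp_sub_left (a := 0) (b := π/2)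
    (fun x => Real.log (2 * Real.sin x)) π
  simp only [Real.sin_pi_sub, sub_zero] at h
  rw [show π - π/2 = π/2 by ring] at h
  rw [← h, intervalIntegral.integral_symm]
  ring

lemma S_zero : (∫ x in (0:ℝ)..(π/2), Real.log (2 * Real.sin x)) = 0 := by
  set S := ∫ x in (0:ℝ)..(π/2), Real.log (2 * Real.sin x) with hS
  have hdouble : (∫ x in (0:ℝ)..(π/2), Real.log (2 * Real.sin (2*x))) = S := by
    have h := intervalIntegral.integral_comp_mul_left (a := 0) (b := π/2)
      (fun x => Real.log (2 * Real.sin x)) (c := 2) (by norm_num)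
    rw [h]
    simp only [mul_zero, smul_eq_mul]
    rw [show (2:ℝ) * (π/2) = π by ring, T_eq]
    ring
  have hae : ∀ᵐ x : ℝ ∂volume, x ∈ Set.uIoc (0:ℝ) (π/2) →
      Real.log (2 * Real.sin (2*x)) = Real.log (2 * Real.sin x) + Real.log (2 * Real.cos x) := by
    have hne : ∀ᵐ x : ℝ ∂volume, x ≠ π/2 := by
      rw [ae_iff]
      have hset : {x : ℝ | ¬ x ≠ π/2} = {(π/2 : ℝ)} := by ext x; simp
      rw [hset]
      exact measure_singleton _
    filter_upwards [hne] with x hx hmem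
    rw [uIoc_of_le (by positivity : (0:ℝ) ≤ π/2)] at hmem
    have hx0 : 0 < x := hmem.1
    have hx2 : x < π/2 := lt_of_le_of_ne hmem.2 hx
    have hsin : 0 < Real.sin x := Real.sin_pos_of_pos_of_lt_pi hx0 (by linarith [Real.pi_pos])
    have hcos : 0 < Real.cos x := Real.cos_pos_of_mem_Ioo ⟨by linarith [Real.pi_pos], hx2⟩
    have hprod : 2 * Real.sin (2*x) = (2 * Real.sin x) * (2 * Real.cos x) := by
      rw [Real.sin_two_mul]; ring
    rw [hprod, Real.log_mul (by positivity) (by positivity)]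
  have hsplit : (∫ x in (0:ℝ)..(π/2), Real.log (2 * Real.sin (2*x)))
      = (∫ x in (0:ℝ)..(π/2), Real.log (2 * Real.sin x) + Real.log (2 * Real.cos x)) :=
    intervalIntegral.integral_congr_ae hae
  rw [intervalIntegral.integral_add sin2_ii cos2_ii, Scos_eq] at hsplit
  rw [hdouble] at hsplit
  linarith

/-- key identity, valid for all θ thanks to Lean's log conventions -/
lemma key_id (θ : ℝ) : Real.log (2 + 2 * Real.cos θ) = 2 * Real.log (2 * Real.cos (θ/2)) := by
  have hc : 2 + 2 * Real.cos θ = (2 * Real.cos (θ/2))^2 := by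
    have h := Real.cos_sq (θ/2)
    rw [show 2*(θ/2) = θ by ring] at h
    linear_combination (-4:ℝ) * h
  rw [hc, Real.log_pow]
  norm_num

lemma logA_ii : IntervalIntegrable (fun θ => Real.log (2 + 2 * Real.cos θ)) volume 0 π := by
  have h := (cos2_ii.comp_mul_right (c := (2⁻¹ : ℝ))).const_mul 2
  rw [show (0:ℝ)/2⁻¹ = 0 by norm_num, show (π/2)/(2:ℝ)⁻¹ = π by ring] at h
  have hfun : (fun θ => Real.log (2 + 2 * Real.cos θ))
      = fun θ => 2 * Real.log (2 * Real.cos (θ * 2⁻¹)) := by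
    funext θ
    rw [key_id θ, mul_comm θ (2:ℝ)⁻¹, inv_mul_eq_div]
  rw [hfun]
  exact h

lemma A_zero : (∫ θ in (0:ℝ)..π, Real.log (2 + 2 * Real.cos θ)) = 0 := by
  have hcongr : (∫ θ in (0:ℝ)..π, Real.log (2 + 2 * Real.cos θ))
      = ∫ θ in (0:ℝ)..π, 2 * Real.log (2 * Real.cos (θ * 2⁻¹)) := by
    apply intervalIntegral.integral_congr
    intro θ _
    show Real.log (2 + 2 * Real.cos θ) = 2 * Real.log (2 * Real.cos (θ * 2⁻¹))
    rw [key_id θ, mul_comm θ (2:ℝ)⁻¹, inv_mul_eq_div]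
  rw [hcongr, intervalIntegral.integral_const_mul]
  have h := intervalIntegral.integral_comp_mul_right (a := 0) (b := π)
    (fun x => Real.log (2 * Real.cos x)) (c := 2⁻¹) (by norm_num)
  rw [h]
  simp only [zero_mul, smul_eq_mul]
  rw [show π * (2:ℝ)⁻¹ = π/2 by ring, Scos_eq, S_zero]
  ring

/-- the antiderivative, written in a globally continuous form -/
noncomputable def Fanti (θ : ℝ) : ℝ :=
  2 * Real.sin (θ/2) * ((2 * Real.cos (θ/2)) * Real.log (2 * Real.cos (θ/2))) + θ - Real.sin θ

lemma Fanti_eq (θ : ℝ) :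
    Fanti θ = Real.sin θ * Real.log (2 + 2 * Real.cos θ) + θ - Real.sin θ := by
  unfold Fanti
  rw [key_id θ]
  have hs : Real.sin θ = 2 * Real.sin (θ/2) * Real.cos (θ/2) := by
    have := Real.sin_two_mul (θ/2)
    rw [show 2 * (θ/2) = θ by ring] at this
    linarith
  linear_combination (-2 * Real.log (2 * Real.cos (θ/2))) * hs

lemma Fanti_cont : Continuous Fanti := by
  unfold Fanti
  have h1 : Continuous fun θ : ℝ => (2 * Real.cos (θ/2)) * Real.log (2 * Real.cos (θ/2)) :=
    Real.continuous_mul_log.comp (by continuity)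
  exact (((by continuity : Continuous fun θ : ℝ => 2 * Real.sin (θ/2)).mul h1).add
    continuous_id).sub Real.continuous_sin

lemma Fanti_deriv {θ : ℝ} (hθ : θ ∈ Set.Ioo 0 π) :
    HasDerivAt Fanti (Real.cos θ * Real.log (2 + 2 * Real.cos θ)) θ := by
  have hpos : 0 < 2 + 2 * Real.cos θ := by
    have : Real.cos π < Real.cos θ := by
      apply Real.cos_lt_cos_of_nonneg_of_le_pi hθ.1.le le_rfl hθ.2
    rw [Real.cos_pi] at this
    linarith
  have hG : HasDerivAt (fun θ => Real.sin θ * Real.log (2 + 2 * Real.cos θ) + θ - Real.sin θ)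
      (Real.cos θ * Real.log (2 + 2 * Real.cos θ)) θ := by
    have h1 : HasDerivAt (fun θ : ℝ => 2 + 2 * Real.cos θ) (2 * (-Real.sin θ)) θ :=
      ((Real.hasDerivAt_cos θ).const_mul 2).const_add 2
    have h2 : HasDerivAt (fun θ : ℝ => Real.log (2 + 2 * Real.cos θ))
        ((2 * (-Real.sin θ)) / (2 + 2 * Real.cos θ)) θ := h1.log (ne_of_gt hpos)
    have h3 := ((Real.hasDerivAt_sin θ).mul h2).add (hasDerivAt_id θ)
    have h4 := h3.sub (Real.hasDerivAt_sin θ)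
    refine h4.congr_deriv ?_
    have hsq := Real.sin_sq_add_cos_sq θ
    have hne : 2 + 2 * Real.cos θ ≠ 0 := ne_of_gt hpos
    field_simp
    ring_nf
    have hc : 1 + Real.cos θ ≠ 0 := by intro h; apply hne; linarith
    have hk : Real.sin θ ^ 2 * (1 + Real.cos θ)⁻¹ = 1 - Real.cos θ := by
      rw [← div_eq_mul_inv, div_eq_iff hc]; nlinarith [hsq]
    nlinarith [hsq, hk]
  have hFG : Fanti = fun θ => Real.sin θ * Real.log (2 + 2 * Real.cos θ) + θ - Real.sin θ :=
    funext Fanti_eq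
  rw [hFG]
  exact hG

lemma cosB_ii : IntervalIntegrable (fun θ => Real.cos θ * Real.log (2 + 2 * Real.cos θ))
    volume 0 π :=
  logA_ii.continuousOn_mul Real.continuous_cos.continuousOn

lemma B_eq : (∫ θ in (0:ℝ)..π, Real.cos θ * Real.log (2 + 2 * Real.cos θ)) = π := by
  have h := intervalIntegral.integral_eq_sub_of_hasDeriv_right_of_le (a := 0) (b := π)
    Real.pi_pos.le Fanti_cont.continuousOn
    (fun x hx => (Fanti_deriv hx).hasDerivWithinAt) cosB_ii
  rw [h]
  unfold Fanti
  simp [Real.sin_pi_div_two, Real.cos_pi_div_two]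

open Real in
theorem stmt_11 :
    (1 / (2 * π)) * ∫ θ in (0 : ℝ)..π, (1 - cos θ) * log (2 + 2 * cos θ) = -(1 / 2) := by
  have hcongr : (∫ θ in (0:ℝ)..π, (1 - cos θ) * log (2 + 2 * cos θ))
      = ∫ θ in (0:ℝ)..π, (log (2 + 2 * cos θ) - cos θ * log (2 + 2 * cos θ)) := by
    apply intervalIntegral.integral_congr
    intro θ _
    ring
  rw [hcongr, intervalIntegral.integral_sub logA_ii cosB_ii, A_zero, B_eq]
  have hπ : π ≠ 0 := Real.pi_ne_zero
  field_simp
  ring
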